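/- Let x̄ ∈ Q_0 be a local Geoffrion properly efficient solution of (VP), let u be a critical direction of (VP) at x̄, and suppose the weak Abadie second-order regularity condition (WASRC), i.e., L²(Q; x̄, u) ⊂ T²(Q_0; x̄, u), holds at x̄ for the direction u. Then there is no v ∈ X satisfying: f_i°(x̄, v) + f_i°°(x̄, u) ≤ 0 for all i ∈ I(x̄; u), f_i°(x̄, v) + f_i°°(x̄, u) < 0 for at least one i ∈ I(x̄; u), and g_j°(x̄, v) + g_j°°(x̄, u) ≤ 0 for all j ∈ J(x̄; u). -/

import Mathlib

open Filter Topology Set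

/-- `F` is locally Lipschitz at `xbar`: Lipschitz on some neighborhood of `xbar`. -/
def LocallyLipschitzAt {X : Type*} [NormedAddCommGroup X] (F : X → ℝ) (xbar : X) : Prop :=
  ∃ L : ℝ, 0 ≤ L ∧ ∃ U ∈ 𝓝 xbar, ∀ x ∈ U, ∀ y ∈ U, |F x - F y| ≤ L * ‖x - y‖

/-- The Clarke generalized directional derivative
`F°(xbar, u) = limsup_{x → xbar, t ↓ 0} (F(x + t u) - F x) / t`. -/
noncomputable def clarkeD {X : Type*} [NormedAddCommGroup X] [NormedSpace ℝ X]
    (F : X → ℝ) (xbar u : X) : ℝ :=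
  Filter.limsup (fun p : X × ℝ => (F (p.1 + p.2 • u) - F p.1) / p.2)
    ((𝓝 xbar) ×ˢ (𝓝[>] (0:ℝ)))

/-- The second-order upper generalized directional derivative
`F°°(xbar, u) = limsup_{t ↓ 0} (F(xbar + t u) - F xbar - t F°(xbar, u)) / (t²/2)`,
a value in the extended reals. -/
noncomputable def clarkeD2 {X : Type*} [NormedAddCommGroup X] [NormedSpace ℝ X]
    (F : X → ℝ) (xbar u : X) : EReal :=
  Filter.limsup
    (fun t : ℝ =>
      (((F (xbar + t • u) - F xbar - t * clarkeD F xbar u) / (t ^ 2 / 2) : ℝ) : EReal))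
    (𝓝[>] (0:ℝ))

/-- The feasible set `Q₀ = {x : g j x ≤ 0 for all j}`. -/
def Q0set {X : Type*} {m : ℕ} (g : Fin m → X → ℝ) : Set X := {x | ∀ j, g j x ≤ 0}

/-- `(a, b) ≤_lex (0, 0)` where the second component is an extended real. -/
def lexLe (a : ℝ) (b : EReal) : Prop := a < 0 ∨ (a = 0 ∧ b ≤ 0)

/-- `(a, b) <_lex (0, 0)` where the second component is an extended real. -/
def lexLt (a : ℝ) (b : EReal) : Prop := a < 0 ∨ (a = 0 ∧ b < 0)

/-- The set `L²(Q₀; xbar, u)`. -/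
def L2Q0 {X : Type*} [NormedAddCommGroup X] [NormedSpace ℝ X] {m : ℕ}
    (g : Fin m → X → ℝ) (xbar u : X) : Set X :=
  {v | ∀ j, g j xbar = 0 →
    lexLe (clarkeD (g j) xbar u) ((clarkeD (g j) xbar v : EReal) + clarkeD2 (g j) xbar u)}

/-- The set `L₀²(Q₀; xbar, u)`. -/
def L2Q0strict {X : Type*} [NormedAddCommGroup X] [NormedSpace ℝ X] {m : ℕ}
    (g : Fin m → X → ℝ) (xbar u : X) : Set X :=
  {v | ∀ j, g j xbar = 0 →
    lexLt (clarkeD (g j) xbar u) ((clarkeD (g j) xbar v : EReal) + clarkeD2 (g j) xbar u)}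

/-- The set `L²(Q; xbar, u)`, where `Q = Q₀ ∩ {x : f i x ≤ f i xbar}`. -/
def L2Q {X : Type*} [NormedAddCommGroup X] [NormedSpace ℝ X] {p m : ℕ}
    (f : Fin p → X → ℝ) (g : Fin m → X → ℝ) (xbar u : X) : Set X :=
  {v | (∀ i, lexLe (clarkeD (f i) xbar u)
          ((clarkeD (f i) xbar v : EReal) + clarkeD2 (f i) xbar u)) ∧
       (∀ j, g j xbar = 0 →
          lexLe (clarkeD (g j) xbar u)
            ((clarkeD (g j) xbar v : EReal) + clarkeD2 (g j) xbar u))}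

/-- The second-order tangent set `T²(Ω; xbar, u)`. -/
def secondTangentSet {X : Type*} [NormedAddCommGroup X] [NormedSpace ℝ X]
    (Ω : Set X) (xbar u : X) : Set X :=
  {v | ∃ t : ℕ → ℝ, ∃ w : ℕ → X, (∀ k, 0 < t k) ∧ Tendsto t atTop (𝓝 0) ∧
       Tendsto w atTop (𝓝 v) ∧ ∀ k, xbar + (t k) • u + ((t k) ^ 2 / 2) • w k ∈ Ω}

/-- The (contingent) tangent cone `T(Ω; xbar)`. -/
def tangentCone' {X : Type*} [NormedAddCommGroup X] [NormedSpace ℝ X]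
    (Ω : Set X) (xbar : X) : Set X :=
  {d | ∃ t : ℕ → ℝ, ∃ w : ℕ → X, (∀ k, 0 < t k) ∧ Tendsto t atTop (𝓝 0) ∧
       Tendsto w atTop (𝓝 d) ∧ ∀ k, xbar + (t k) • w k ∈ Ω}

/-- The set `A(xbar; u)`. -/
def Aset {X : Type*} [NormedAddCommGroup X] [NormedSpace ℝ X] {m : ℕ}
    (g : Fin m → X → ℝ) (xbar u : X) : Set X :=
  {v | ∀ j, g j xbar = 0 → clarkeD (g j) xbar u = 0 →
    ∃ δ > 0, ∀ t ∈ Set.Ioo (0:ℝ) δ, g j (xbar + t • u + (t ^ 2 / 2) • v) ≤ 0}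

/-- The set `B(xbar; u)`. -/
def Bset {X : Type*} [NormedAddCommGroup X] [NormedSpace ℝ X] {m : ℕ}
    (g : Fin m → X → ℝ) (xbar u : X) : Set X :=
  {v | ∀ j, g j xbar = 0 → clarkeD (g j) xbar u = 0 →
    (clarkeD (g j) xbar v : EReal) + clarkeD2 (g j) xbar u ≤ 0}

/-- `u` is a critical direction of (VP) at `xbar`. -/
def IsCriticalDir {X : Type*} [NormedAddCommGroup X] [NormedSpace ℝ X] {p m : ℕ}
    (f : Fin p → X → ℝ) (g : Fin m → X → ℝ) (xbar u : X) : Prop :=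
  (∀ i, clarkeD (f i) xbar u ≤ 0) ∧ (∃ i, clarkeD (f i) xbar u = 0) ∧
  (∀ j, g j xbar = 0 → clarkeD (g j) xbar u ≤ 0)

/-- `xbar` is a local weak efficient solution of (VP). -/
def LocalWeakEff {X : Type*} [NormedAddCommGroup X] {p m : ℕ}
    (f : Fin p → X → ℝ) (g : Fin m → X → ℝ) (xbar : X) : Prop :=
  ∃ U ∈ 𝓝 xbar, ∀ x ∈ U, x ∈ Q0set g → ¬ (∀ i, f i x < f i xbar)

/-- `xbar` is a local Geoffrion properly efficient solution of (VP). -/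
def LocalGeoffrionEff {X : Type*} [NormedAddCommGroup X] {p m : ℕ}
    (f : Fin p → X → ℝ) (g : Fin m → X → ℝ) (xbar : X) : Prop :=
  ∃ U ∈ 𝓝 xbar,
    (∀ x ∈ U, x ∈ Q0set g → (∀ i, f i x ≤ f i xbar) → (∀ i, f i x = f i xbar)) ∧
    ∃ M > (0:ℝ), ∀ i, ∀ x ∈ U, x ∈ Q0set g → f i x < f i xbar →
      ∃ j, f j xbar < f j x ∧ (f i xbar - f i x) / (f j x - f j xbar) ≤ M

/-!
Along a second-order tangent curve `x_k = xbar + t_k u + (t_k²/2) w_k` with `w_k → v`, every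
objective with `f_i°(xbar, u) = 0` satisfies
`f_i(x_k) - f_i(xbar) ≤ (f_i°(xbar, v) + f_i°°(xbar, u) + o(1)) t_k²/2`, while every objective
with `f_i°(xbar, u) < 0` strictly decreases. If `v` solved the system, (WASRC) would make such a
curve feasible; the objective `i₀` with a strictly negative second-order term drops by a multiple
of `t_k²`, so Geoffrion's bound forces some objective `j` to increase by a comparable amount
infinitely often. That `j` cannot be first-order decreasing, so, `v` solving the system, its
increase is `o(t_k²)`: a contradiction.
-/

theorem EReal.exists_lt_of_coe_add_lt {b c : ℝ} {D : EReal} (h : (b : EReal) + D < c) :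
    ∃ d : ℝ, D < d ∧ b + d < c := by
  have hD : D < ((c - b : ℝ) : EReal) := by
    rw [EReal.coe_sub, EReal.lt_sub_iff_add_lt (.inl (EReal.coe_ne_bot b))
      (.inl (EReal.coe_ne_top b)), add_comm]
    exact h
  obtain ⟨d, hDd, hdc⟩ := EReal.exists_between_coe_real hD
  exact ⟨d, hDd, by linarith [EReal.coe_lt_coe_iff.1 hdc]⟩

theorem lexLe_of_nonpos {a : ℝ} {b : EReal} (ha : a ≤ 0) (hb : a = 0 → b ≤ 0) : lexLe a b :=
  ha.lt_or_eq.imp id fun h => ⟨h, hb h⟩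

theorem mem_L2Q_of_isCriticalDir {X : Type*} [NormedAddCommGroup X] [NormedSpace ℝ X]
    {p m : ℕ} {f : Fin p → X → ℝ} {g : Fin m → X → ℝ} {xbar u v : X}
    (hu : IsCriticalDir f g xbar u)
    (hf : ∀ i, clarkeD (f i) xbar u = 0 →
      (clarkeD (f i) xbar v : EReal) + clarkeD2 (f i) xbar u ≤ 0)
    (hg : ∀ j, g j xbar = 0 → clarkeD (g j) xbar u = 0 →
      (clarkeD (g j) xbar v : EReal) + clarkeD2 (g j) xbar u ≤ 0) :
    v ∈ L2Q f g xbar u :=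
  ⟨fun i => lexLe_of_nonpos (hu.1 i) (hf i),
    fun j hj => lexLe_of_nonpos (hu.2.2 j hj) (hg j hj)⟩

section Estimates

variable {α : Type*} {l : Filter α} {X : Type*} [NormedAddCommGroup X]

theorem LocallyLipschitzAt.exists_eventually_sub_le {F : X → ℝ} {xbar : X}
    (hF : LocallyLipschitzAt F xbar) {y z : α → X}
    (hy : Tendsto y l (𝓝 xbar)) (hz : Tendsto z l (𝓝 xbar)) :
    ∃ L, ∀ᶠ a in l, F (z a) - F (y a) ≤ L * ‖z a - y a‖ := by
  obtain ⟨L, -, U, hU, hlip⟩ := hF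
  refine ⟨L, ?_⟩
  filter_upwards [hy hU, hz hU] with a hya hza
  exact (le_abs_self _).trans (hlip _ hza _ hya)

variable [NormedSpace ℝ X] {F : X → ℝ} {xbar : X}

theorem LocallyLipschitzAt.eventually_sub_le_mul (hF : LocallyLipschitzAt F xbar)
    {y : α → X} {s : α → ℝ} {w : α → X} {v : X}
    (hy : Tendsto y l (𝓝 xbar)) (hs : Tendsto s l (𝓝[>] 0)) (hw : Tendsto w l (𝓝 v))
    {ε : ℝ} (hε : 0 < ε) :
    ∀ᶠ a in l, F (y a + s a • w a) - F (y a + s a • v) ≤ ε * s a := by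
  have hs0 : Tendsto s l (𝓝 0) := hs.mono_right nhdsWithin_le_nhds
  have hcurve {z : α → X} {x : X} (hz : Tendsto z l (𝓝 x)) :
      Tendsto (fun a => y a + s a • z a) l (𝓝 xbar) := by
    simpa using hy.add (hs0.smul hz)
  obtain ⟨L, hlip⟩ := hF.exists_eventually_sub_le (hcurve tendsto_const_nhds) (hcurve hw)
  have hwv : ∀ᶠ a in l, L * ‖w a - v‖ < ε :=
    (tendsto_const_nhds.mul (tendsto_iff_norm_sub_tendsto_zero.1 hw)).eventually
      (gt_mem_nhds (by rwa [mul_zero]))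
  filter_upwards [hlip, hwv, hs self_mem_nhdsWithin] with a hlip hwv (hpos : 0 < s a)
  calc F (y a + s a • w a) - F (y a + s a • v)
      ≤ L * ‖y a + s a • w a - (y a + s a • v)‖ := hlip
    _ = L * ‖w a - v‖ * s a := by
      rw [add_sub_add_left_eq_sub, ← smul_sub, norm_smul, Real.norm_of_nonneg hpos.le]; ring
    _ ≤ ε * s a := by gcongr

theorem LocallyLipschitzAt.isBoundedUnder_clarkeQuotient (hF : LocallyLipschitzAt F xbar)
    (d : X) :
    IsBoundedUnder (· ≤ ·) (𝓝 xbar ×ˢ 𝓝[>] (0 : ℝ))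
      (fun p : X × ℝ => (F (p.1 + p.2 • d) - F p.1) / p.2) := by
  have hfst : Tendsto Prod.fst (𝓝 xbar ×ˢ 𝓝[>] (0 : ℝ)) (𝓝 xbar) := tendsto_fst
  have hsnd : Tendsto Prod.snd (𝓝 xbar ×ˢ 𝓝[>] (0 : ℝ)) (𝓝[>] 0) := tendsto_snd
  obtain ⟨L, hlip⟩ := hF.exists_eventually_sub_le hfst
    (by simpa using hfst.add ((hsnd.mono_right nhdsWithin_le_nhds).smul_const d))
  refine isBoundedUnder_of_eventually_le (a := L * ‖d‖) ?_
  filter_upwards [hlip, hsnd self_mem_nhdsWithin] with q hq (hpos : 0 < q.2)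
  rw [div_le_iff₀ hpos]
  simpa [norm_smul, abs_of_pos hpos, mul_comm, mul_left_comm] using hq

theorem LocallyLipschitzAt.eventually_sub_lt_of_clarkeD_lt (hF : LocallyLipschitzAt F xbar)
    {y : α → X} {s : α → ℝ} (hy : Tendsto y l (𝓝 xbar)) (hs : Tendsto s l (𝓝[>] 0))
    {d : X} {c : ℝ} (hc : clarkeD F xbar d < c) :
    ∀ᶠ a in l, F (y a + s a • d) - F (y a) < c * s a := by
  have hq := eventually_lt_of_limsup_lt hc (hF.isBoundedUnder_clarkeQuotient d)
  filter_upwards [(hy.prodMk hs).eventually hq, hs self_mem_nhdsWithin] with a ha (hpos : 0 < s a)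
  exact (div_lt_iff₀ hpos).1 ha

theorem eventually_sub_lt_of_clarkeD2_lt {u : X} (hu : clarkeD F xbar u = 0)
    {s : α → ℝ} (hs : Tendsto s l (𝓝[>] 0)) {d : ℝ} (hd : clarkeD2 F xbar u < d) :
    ∀ᶠ a in l, F (xbar + s a • u) - F xbar < d * (s a ^ 2 / 2) := by
  filter_upwards [hs.eventually (eventually_lt_of_limsup_lt hd), hs self_mem_nhdsWithin]
    with a ha (hpos : 0 < s a)
  rw [hu, EReal.coe_lt_coe_iff, mul_zero, sub_zero, div_lt_iff₀ (by positivity)] at ha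
  exact ha

variable {u v : X} {t : α → ℝ} {w : α → X}

theorem LocallyLipschitzAt.eventually_lt_of_clarkeD_neg (hF : LocallyLipschitzAt F xbar)
    (hu : clarkeD F xbar u < 0) (ht : Tendsto t l (𝓝[>] 0)) (hw : Tendsto w l (𝓝 v)) :
    ∀ᶠ a in l, F (xbar + t a • u + (t a ^ 2 / 2) • w a) < F xbar := by
  have hw' : Tendsto (fun a => u + (t a / 2) • w a) l (𝓝 u) := by
    simpa using tendsto_const_nhds.add
      (((ht.mono_right nhdsWithin_le_nhds).div_const 2).smul hw)
  filter_upwards [hF.eventually_sub_lt_of_clarkeD_lt tendsto_const_nhds ht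
      (d := u) (c := clarkeD F xbar u / 2) (by linarith),
    hF.eventually_sub_le_mul tendsto_const_nhds ht hw' (ε := -clarkeD F xbar u / 4) (by linarith),
    ht self_mem_nhdsWithin] with a h₁ h₂ (hpos : 0 < t a)
  have hx : xbar + t a • u + (t a ^ 2 / 2) • w a = xbar + t a • (u + (t a / 2) • w a) := by
    rw [smul_add, smul_smul, ← add_assoc, mul_div_assoc', ← sq]
  rw [hx]
  linarith [mul_neg_of_neg_of_pos hu hpos]

theorem LocallyLipschitzAt.eventually_sub_lt_of_clarkeD_eq_zero
    (hF : LocallyLipschitzAt F xbar) (hu : clarkeD F xbar u = 0) {c : ℝ}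
    (hc : (clarkeD F xbar v : EReal) + clarkeD2 F xbar u < c)
    (ht : Tendsto t l (𝓝[>] 0)) (hw : Tendsto w l (𝓝 v)) :
    ∀ᶠ a in l, F (xbar + t a • u + (t a ^ 2 / 2) • w a) - F xbar < c * (t a ^ 2 / 2) := by
  obtain ⟨d, hd, hdc⟩ := EReal.exists_lt_of_coe_add_lt hc
  set ε := (c - clarkeD F xbar v - d) / 2 with hε
  have hs : Tendsto (fun a => t a ^ 2 / 2) l (𝓝[>] 0) := by
    refine tendsto_nhdsWithin_iff.2 ⟨?_, ?_⟩
    · simpa using ((ht.mono_right nhdsWithin_le_nhds).pow 2).div_const 2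
    · filter_upwards [ht self_mem_nhdsWithin] with a (hpos : 0 < t a)
      exact mem_Ioi.2 (by positivity)
  have hy : Tendsto (fun a => xbar + t a • u) l (𝓝 xbar) := by
    simpa using tendsto_const_nhds.add ((ht.mono_right nhdsWithin_le_nhds).smul_const u)
  filter_upwards [eventually_sub_lt_of_clarkeD2_lt hu ht hd,
    hF.eventually_sub_lt_of_clarkeD_lt hy hs (d := v) (c := clarkeD F xbar v + ε) (by linarith),
    hF.eventually_sub_le_mul hy hs hw (ε := ε) (by linarith)] with a h₁ h₂ h₃
  linear_combination h₁ + h₂ + h₃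

end Estimates

theorem LocalGeoffrionEff.exists_frequently_le_mul {α : Type*} {l : Filter α} [l.NeBot]
    {X : Type*} [NormedAddCommGroup X] {p m : ℕ} {f : Fin p → X → ℝ}
    {g : Fin m → X → ℝ} {xbar : X} (hgeo : LocalGeoffrionEff f g xbar) {x : α → X}
    (hx : Tendsto x l (𝓝 xbar)) (hQ : ∀ a, x a ∈ Q0set g) {i : Fin p}
    (hi : ∀ᶠ a in l, f i (x a) < f i xbar) :
    ∃ M > 0, ∃ j, ∃ᶠ a in l,
      f j xbar < f j (x a) ∧ f i xbar - f i (x a) ≤ M * (f j (x a) - f j xbar) := by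
  obtain ⟨U, hU, -, M, hM, hratio⟩ := hgeo
  refine ⟨M, hM, frequently_exists.1 (Eventually.frequently ?_)⟩
  filter_upwards [hx hU, hi] with a haU hai
  obtain ⟨j, hj, hjM⟩ := hratio i (x a) haU (hQ a) hai
  exact ⟨j, hj, (div_le_iff₀ (sub_pos.2 hj)).1 hjM⟩

theorem strong_second_order_primal_kkt_fixed_dir_general
    {X : Type*} [NormedAddCommGroup X] [NormedSpace ℝ X]
    {p m : ℕ} (f : Fin p → X → ℝ) (g : Fin m → X → ℝ) (xbar : X)
    (hf : ∀ i, LocallyLipschitzAt (f i) xbar)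
    (hgeo : LocalGeoffrionEff f g xbar)
    (u : X) (hu : IsCriticalDir f g xbar u)
    (hWASRC : L2Q f g xbar u ⊆ secondTangentSet (Q0set g) xbar u) :
    ¬ ∃ v : X,
      (∀ i, clarkeD (f i) xbar u = 0 →
        (clarkeD (f i) xbar v : EReal) + clarkeD2 (f i) xbar u ≤ 0) ∧
      (∃ i, clarkeD (f i) xbar u = 0 ∧
        (clarkeD (f i) xbar v : EReal) + clarkeD2 (f i) xbar u < 0) ∧
      (∀ j, g j xbar = 0 → clarkeD (g j) xbar u = 0 →
        (clarkeD (g j) xbar v : EReal) + clarkeD2 (g j) xbar u ≤ 0) := by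
  rintro ⟨v, hvf, ⟨i₀, hi₀u, hi₀v⟩, hvg⟩
  obtain ⟨t, w, ht_pos, ht₀, hw, hQ⟩ := hWASRC (mem_L2Q_of_isCriticalDir hu hvf hvg)
  have ht : Tendsto t atTop (𝓝[>] 0) := tendsto_nhdsWithin_iff.2 ⟨ht₀, .of_forall ht_pos⟩
  have hx : Tendsto (fun k => xbar + t k • u + (t k ^ 2 / 2) • w k) atTop (𝓝 xbar) := by
    simpa using
      (tendsto_const_nhds.add (ht₀.smul_const u)).add (((ht₀.pow 2).div_const 2).smul hw)
  obtain ⟨c, hi₀c, hc⟩ := EReal.exists_between_coe_real (hi₀v.trans_eq EReal.coe_zero.symm)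
  replace hc : c < 0 := EReal.coe_lt_coe_iff.1 hc
  have hi₀ := (hf i₀).eventually_sub_lt_of_clarkeD_eq_zero hi₀u hi₀c ht hw
  obtain ⟨M, hM, j, hj⟩ := hgeo.exists_frequently_le_mul hx hQ (i := i₀) <| by
    filter_upwards [hi₀, ht self_mem_nhdsWithin] with k hk (hpos : 0 < t k)
    linarith [mul_neg_of_neg_of_pos hc (by positivity : 0 < t k ^ 2 / 2)]
  have hju : clarkeD (f j) xbar u = 0 := by
    by_contra hne
    obtain ⟨k, hk, hk'⟩ := (hj.and_eventually
      ((hf j).eventually_lt_of_clarkeD_neg ((hu.1 j).lt_of_ne hne) ht hw)).exists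
    exact hk.1.not_gt hk'
  -- `M * (-c / M) = -c`: Geoffrion's bound would then keep the drop of `f i₀` below `-c t²/2`
  have hjc : (clarkeD (f j) xbar v : EReal) + clarkeD2 (f j) xbar u < (-c / M : ℝ) :=
    (hvf j hju).trans_lt (EReal.coe_pos.2 (div_pos (neg_pos.2 hc) hM))
  obtain ⟨k, ⟨-, hjM⟩, hi₀k, hjk⟩ := (hj.and_eventually
    (hi₀.and ((hf j).eventually_sub_lt_of_clarkeD_eq_zero hju hjc ht hw))).exists
  have hMj := mul_lt_mul_of_pos_left hjk hM
  rw [← mul_assoc, mul_div_cancel₀ _ hM.ne'] at hMj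
  linarith

/-- Corollary 5.1: if `xbar` is a local Geoffrion properly efficient solution
of (VP), `u` is a critical direction, and (WASRC) holds at `xbar` for `u`, then the system
`f_i°(xbar,v) + f_i°°(xbar,u) ≤ 0 (i ∈ I(xbar;u))`, with strict inequality for at least one
`i ∈ I(xbar;u)`, and `g_j°(xbar,v) + g_j°°(xbar,u) ≤ 0 (j ∈ J(xbar;u))`,
has no solution `v`. -/
theorem strong_second_order_primal_kkt_fixed_dir
    {X : Type*} [NormedAddCommGroup X] [NormedSpace ℝ X] [CompleteSpace X]
    {p m : ℕ} (f : Fin p → X → ℝ) (g : Fin m → X → ℝ) (xbar : X)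
    (hx : xbar ∈ Q0set g)
    (hf : ∀ i, LocallyLipschitzAt (f i) xbar)
    (hg : ∀ j, g j xbar = 0 → LocallyLipschitzAt (g j) xbar)
    (hgc : ∀ j, g j xbar ≠ 0 → ContinuousAt (g j) xbar)
    (hgeo : LocalGeoffrionEff f g xbar)
    (u : X) (hu : IsCriticalDir f g xbar u)
    (hWASRC : L2Q f g xbar u ⊆ secondTangentSet (Q0set g) xbar u) :
    ¬ ∃ v : X,
      (∀ i, clarkeD (f i) xbar u = 0 →
        (clarkeD (f i) xbar v : EReal) + clarkeD2 (f i) xbar u ≤ 0) ∧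
      (∃ i, clarkeD (f i) xbar u = 0 ∧
        (clarkeD (f i) xbar v : EReal) + clarkeD2 (f i) xbar u < 0) ∧
      (∀ j, g j xbar = 0 → clarkeD (g j) xbar u = 0 →
        (clarkeD (g j) xbar v : EReal) + clarkeD2 (g j) xbar u ≤ 0) :=
  strong_second_order_primal_kkt_fixed_dir_general f g xbar hf hgeo u hu hWASRC
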